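/- arXiv:2601.17776 — 2 statements merged into one kernel-verified Lean document; each statement's English description precedes it below -/
import Mathlib

section
/- Let r : ℝ → ℝ satisfy |r(s₁) - r(s₂)| ≤ β|s₁ - s₂| for all s₁, s₂ ∈ ℝ and some β > 0, with r(0) = 0. Define h(s) = r(s)·s. Then for all real numbers a and b, |h(a) - h(a - b) - h(b)| ≤ 2β|a - b|·|b|. -/
theorem stmt6_general (r : ℝ → ℝ) (β : ℝ)
    (hlip : ∀ s₁ s₂ : ℝ, |r s₁ - r s₂| ≤ β * |s₁ - s₂|) (a b : ℝ) :
    |r a * a - r (a - b) * (a - b) - r b * b| ≤ 2 * β * |a - b| * |b| := by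
  have decomp : r a * a - r (a - b) * (a - b) - r b * b
      = (r a - r (a - b)) * (a - b) + (r a - r b) * b := by ring
  have hlip_left : |r a - r (a - b)| ≤ β * |b| := by simpa using hlip a (a - b)
  calc |r a * a - r (a - b) * (a - b) - r b * b|
      ≤ |r a - r (a - b)| * |a - b| + |r a - r b| * |b| := by
        rw [decomp, ← abs_mul, ← abs_mul]
        exact abs_add_le _ _
    _ ≤ β * |b| * |a - b| + β * |a - b| * |b| := by gcongr; exact hlip a b
    _ = 2 * β * |a - b| * |b| := by ring

theorem stmt6 (r : ℝ → ℝ) (β : ℝ) (hβ : 0 < β) (hr0 : r 0 = 0)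
    (hlip : ∀ s₁ s₂ : ℝ, |r s₁ - r s₂| ≤ β * |s₁ - s₂|) (a b : ℝ) :
    |r a * a - r (a - b) * (a - b) - r b * b| ≤ 2 * β * |a - b| * |b| :=
  stmt6_general r β hlip a b
end

section
/- Let r : ℝ → ℝ be globally β-Lipschitz with r(0) = 0, and set h(s) = r(s)s. Let (u_n) be a bounded sequence in L²(ℝ^N) converging to u in L²_loc(ℝ^N) (and weakly in L²). Then ∫_{ℝ^N} h(u_n) dx - ∫_{ℝ^N} h(u_n - u) dx - ∫_{ℝ^N} h(u) dx → 0 as n → ∞. -/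
open MeasureTheory Filter Topology Set
open scoped ENNReal NNReal

/-!
With `h s = r s * s`, the Lipschitz bound gives `|h a - h (a - b) - h b| ≤ 2β |a - b| |b|`, so the
defect is at most `2β ∫ |uₙ - v| |v|`. Weak convergence makes `(uₙ)` bounded in `L²`
(Banach–Steinhaus). On a compact set `K`, Cauchy–Schwarz and `L²_loc` convergence make
`∫_K |uₙ - v| |v|` small; off `K` it is at most `sup ‖uₙ - v‖₂ · ‖v‖_{L²(Kᶜ)}`, which is small once
`K` is large.
-/

namespace LipschitzWith

variable {K : ℝ≥0} {r : ℝ → ℝ}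

lemma abs_mul_self_sub_sub_le (hr : LipschitzWith K r) (a b : ℝ) :
    |r a * a - r (a - b) * (a - b) - r b * b| ≤ 2 * K * (|a - b| * |b|) := by
  have h₁ : |r a - r (a - b)| ≤ K * |b| := by
    simpa [Real.dist_eq] using hr.dist_le_mul a (a - b)
  have h₂ : |r a - r b| ≤ K * |a - b| := by
    simpa [Real.dist_eq] using hr.dist_le_mul a b
  calc |r a * a - r (a - b) * (a - b) - r b * b|
      = |(r a - r (a - b)) * (a - b) + (r a - r b) * b| := by congr 1; ring
    _ ≤ |r a - r (a - b)| * |a - b| + |r a - r b| * |b| := by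
        rw [← abs_mul, ← abs_mul]; exact abs_add_le _ _
    _ ≤ K * |b| * |a - b| + K * |a - b| * |b| := by gcongr
    _ = 2 * K * (|a - b| * |b|) := by ring

lemma abs_mul_self_le (hr : LipschitzWith K r) (hr0 : r 0 = 0) (s : ℝ) :
    |r s * s| ≤ K * s ^ 2 := by
  have : |r s| ≤ K * |s| := by simpa [Real.dist_eq, hr0] using hr.dist_le_mul s 0
  rw [abs_mul, sq, ← abs_mul_abs_self s, ← mul_assoc]
  exact mul_le_mul_of_nonneg_right this (abs_nonneg s)

variable {α : Type*} [MeasurableSpace α] {μ : Measure α} {f g : α → ℝ}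

lemma integrable_comp_mul_self (hr : LipschitzWith K r) (hr0 : r 0 = 0) (hf : MemLp f 2 μ) :
    Integrable (fun x => r (f x) * f x) μ :=
  (hf.integrable_sq.const_mul K).mono' ((hr.continuous.comp_aestronglyMeasurable hf.1).mul hf.1)
    (ae_of_all _ fun x => hr.abs_mul_self_le hr0 (f x))

lemma enorm_integral_comp_mul_self_sub_sub_le (hr : LipschitzWith K r) (hr0 : r 0 = 0)
    (hf : MemLp f 2 μ) (hg : MemLp g 2 μ) :
    ‖(∫ x, r (f x) * f x ∂μ) - (∫ x, r (f x - g x) * (f x - g x) ∂μ) - ∫ x, r (g x) * g x ∂μ‖ₑ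
      ≤ ENNReal.ofReal (2 * K) * ∫⁻ x, ‖f x - g x‖ₑ * ‖g x‖ₑ ∂μ := by
  have hfg : MemLp (fun x => f x - g x) 2 μ := hf.sub hg
  have h₁ := hr.integrable_comp_mul_self hr0 hf
  have h₂ := hr.integrable_comp_mul_self hr0 hfg
  have h₁₂ : Integrable (fun x => r (f x) * f x - r (f x - g x) * (f x - g x)) μ := h₁.sub h₂
  rw [← integral_sub h₁ h₂, ← integral_sub h₁₂ (hr.integrable_comp_mul_self hr0 hg),
    ← lintegral_const_mul' _ _ ENNReal.ofReal_ne_top]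
  refine (enorm_integral_le_lintegral_enorm _).trans (lintegral_mono fun x => ?_)
  simp only [Real.enorm_eq_ofReal_abs, ← ENNReal.ofReal_mul (abs_nonneg _),
    ← ENNReal.ofReal_mul (by positivity : (0 : ℝ) ≤ 2 * K)]
  exact ENNReal.ofReal_le_ofReal (hr.abs_mul_self_sub_sub_le (f x) (g x))

end LipschitzWith

lemma ENNReal.tendsto_nhds_zero_of_le_add {ι κ : Type*} {l : Filter ι} {l' : Filter κ} [l'.NeBot]
    {a : ι → ℝ≥0∞} {b : κ → ι → ℝ≥0∞} {c : κ → ℝ≥0∞} (hb : ∀ k, Tendsto (b k) l (𝓝 0))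
    (hc : Tendsto c l' (𝓝 0)) (hle : ∀ k i, a i ≤ b k i + c k) : Tendsto a l (𝓝 0) := by
  rw [ENNReal.tendsto_nhds_zero]
  intro ε hε
  have hε2 : 0 < ε / 2 := ENNReal.half_pos hε.ne'
  obtain ⟨k, hk⟩ := (ENNReal.tendsto_nhds_zero.1 hc _ hε2).exists
  filter_upwards [ENNReal.tendsto_nhds_zero.1 (hb k) _ hε2] with i hi
  calc a i ≤ b k i + c k := hle k i
    _ ≤ ε / 2 + ε / 2 := add_le_add hi hk
    _ = ε := ENNReal.add_halves ε

namespace MeasureTheory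

variable {α E F : Type*} [MeasurableSpace α] {μ : Measure α}
  [NormedAddCommGroup E] [NormedAddCommGroup F]

lemma lintegral_enorm_mul_le_eLpNorm_two_mul {f : α → E} {g : α → F}
    (hf : AEStronglyMeasurable f μ) (hg : AEStronglyMeasurable g μ) :
    ∫⁻ x, ‖f x‖ₑ * ‖g x‖ₑ ∂μ ≤ eLpNorm f 2 μ * eLpNorm g 2 μ := by
  simpa [eLpNorm_eq_lintegral_rpow_enorm_toReal two_ne_zero ENNReal.ofNat_ne_top] using
    ENNReal.lintegral_mul_le_Lp_mul_Lq μ Real.HolderConjugate.two_two hf.enorm hg.enorm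

lemma tendsto_setLIntegral_compl_atTop {s : ℕ → Set α} (hs : ∀ n, MeasurableSet (s n))
    (hmono : Monotone s) (hcover : ⋃ n, s n = univ) {f : α → ℝ≥0∞} (hf : ∫⁻ x, f x ∂μ ≠ ∞) :
    Tendsto (fun n => ∫⁻ x in (s n)ᶜ, f x ∂μ) atTop (𝓝 0) := by
  have := tendsto_measure_iInter_atTop (μ := μ.withDensity f)
    (fun n => (hs n).compl.nullMeasurableSet) (fun _ _ h => compl_subset_compl.2 (hmono h))
    ⟨0, by
      rw [withDensity_apply _ (hs 0).compl]
      exact ne_top_of_le_ne_top hf (setLIntegral_le_lintegral _ _)⟩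
  rw [← compl_iUnion, hcover, compl_univ, measure_empty] at this
  exact this.congr fun n => withDensity_apply _ (hs n).compl

lemma MemLp.tendsto_eLpNorm_restrict_compl_atTop {p : ℝ≥0∞} (hp0 : p ≠ 0) (hp : p ≠ ∞)
    {f : α → E} (hf : MemLp f p μ) {s : ℕ → Set α} (hs : ∀ n, MeasurableSet (s n))
    (hmono : Monotone s) (hcover : ⋃ n, s n = univ) :
    Tendsto (fun n => eLpNorm f p (μ.restrict (s n)ᶜ)) atTop (𝓝 0) := by
  have hint := tendsto_setLIntegral_compl_atTop hs hmono hcover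
    (lintegral_rpow_enorm_lt_top_of_eLpNorm_lt_top hp0 hp hf.2).ne
  have hexp : 0 < p.toReal⁻¹ := inv_pos.2 (ENNReal.toReal_pos hp0 hp)
  simp_rw [eLpNorm_eq_lintegral_rpow_enorm_toReal hp0 hp]
  simpa [ENNReal.zero_rpow_of_pos hexp, Function.comp_def] using
    ((ENNReal.continuous_rpow_const (y := p.toReal⁻¹)).tendsto 0).comp hint

lemma inner_toLp_eq_integral_mul {f : α → ℝ} (hf : MemLp f 2 μ) (φ : α →₂[μ] ℝ) :
    inner ℝ (hf.toLp f) φ = ∫ x, f x * φ x ∂μ := by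
  rw [L2.inner_def]
  refine integral_congr_ae ?_
  filter_upwards [hf.coeFn_toLp] with x hx
  simp [hx, mul_comm]

lemma exists_eLpNorm_two_le_of_bddAbove_integral_mul {ι : Type*} {u : ι → α → ℝ}
    (hu : ∀ i, MemLp (u i) 2 μ)
    (hbdd : ∀ φ : α → ℝ, MemLp φ 2 μ → BddAbove (range fun i => |∫ x, u i x * φ x ∂μ|)) :
    ∃ C : ℝ≥0∞, C ≠ ∞ ∧ ∀ i, eLpNorm (u i) 2 μ ≤ C := by
  obtain ⟨C, hC⟩ := banach_steinhaus (g := fun i => innerSL ℝ ((hu i).toLp (u i))) fun φ => by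
    obtain ⟨C, hC⟩ := hbdd φ (Lp.memLp φ)
    exact ⟨C, fun i => by simpa [inner_toLp_eq_integral_mul] using hC ⟨i, rfl⟩⟩
  refine ⟨ENNReal.ofReal C, ENNReal.ofReal_ne_top, fun i => ?_⟩
  have hnorm : ‖innerSL ℝ ((hu i).toLp (u i))‖ = (eLpNorm (u i) 2 μ).toReal := by
    rw [innerSL_apply_norm, Lp.norm_toLp]
  rw [ENNReal.le_ofReal_iff_toReal_le (hu i).2.ne ((norm_nonneg _).trans (hC i)), ← hnorm]
  exact hC i

variable [TopologicalSpace α] [T2Space α] [SigmaCompactSpace α] [OpensMeasurableSpace α]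

lemma tendsto_lintegral_enorm_mul_of_tendsto_eLpNorm_restrict {w : ℕ → α → E} {v : α → F}
    (hw : ∀ n, AEStronglyMeasurable (w n) μ) (hv : MemLp v 2 μ) {C : ℝ≥0∞} (hC : C ≠ ∞)
    (hbound : ∀ n, eLpNorm (w n) 2 μ ≤ C)
    (hloc : ∀ K : Set α, IsCompact K →
      Tendsto (fun n => eLpNorm (w n) 2 (μ.restrict K)) atTop (𝓝 0)) :
    Tendsto (fun n => ∫⁻ x, ‖w n x‖ₑ * ‖v x‖ₑ ∂μ) atTop (𝓝 0) := by
  set K := compactCovering α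
  have hK : ∀ m, MeasurableSet (K m) := fun m => (isCompact_compactCovering α m).measurableSet
  refine ENNReal.tendsto_nhds_zero_of_le_add (l' := atTop)
    (b := fun m n => eLpNorm (w n) 2 (μ.restrict (K m)) * eLpNorm v 2 μ)
    (c := fun m => C * eLpNorm v 2 (μ.restrict (K m)ᶜ)) (fun m => ?_) ?_ (fun m n => ?_)
  · simpa using ENNReal.Tendsto.mul_const (hloc _ (isCompact_compactCovering α m)) (Or.inr hv.2.ne)
  · simpa using ENNReal.Tendsto.const_mul (hv.tendsto_eLpNorm_restrict_compl_atTop two_ne_zero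
      ENNReal.ofNat_ne_top hK (compactCovering_subset α) (iUnion_compactCovering α)) (Or.inr hC)
  calc ∫⁻ x, ‖w n x‖ₑ * ‖v x‖ₑ ∂μ
      = (∫⁻ x in K m, ‖w n x‖ₑ * ‖v x‖ₑ ∂μ) + ∫⁻ x in (K m)ᶜ, ‖w n x‖ₑ * ‖v x‖ₑ ∂μ :=
        (lintegral_add_compl _ (hK m)).symm
    _ ≤ eLpNorm (w n) 2 (μ.restrict (K m)) * eLpNorm v 2 (μ.restrict (K m))
        + eLpNorm (w n) 2 (μ.restrict (K m)ᶜ) * eLpNorm v 2 (μ.restrict (K m)ᶜ) :=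
        add_le_add (lintegral_enorm_mul_le_eLpNorm_two_mul (hw n).restrict hv.1.restrict)
          (lintegral_enorm_mul_le_eLpNorm_two_mul (hw n).restrict hv.1.restrict)
    _ ≤ eLpNorm (w n) 2 (μ.restrict (K m)) * eLpNorm v 2 μ
        + C * eLpNorm v 2 (μ.restrict (K m)ᶜ) := by
        gcongr
        · exact Measure.restrict_le_self
        · exact (eLpNorm_mono_measure _ Measure.restrict_le_self).trans (hbound n)

end MeasureTheory

theorem stmt7_general (N : ℕ) (β : ℝ) (r : ℝ → ℝ) (hr0 : r 0 = 0)
    (hlip : ∀ s₁ s₂ : ℝ, |r s₁ - r s₂| ≤ β * |s₁ - s₂|)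
    (u : ℕ → EuclideanSpace ℝ (Fin N) → ℝ) (v : EuclideanSpace ℝ (Fin N) → ℝ)
    (hu2 : ∀ n, MemLp (u n) 2 volume) (hv2 : MemLp v 2 volume)
    (hloc : ∀ K : Set (EuclideanSpace ℝ (Fin N)), IsCompact K →
      Tendsto (fun n => eLpNorm (fun x => u n x - v x) 2 (volume.restrict K)) atTop (nhds 0))
    (hweak : ∀ φ : EuclideanSpace ℝ (Fin N) → ℝ, MemLp φ 2 volume →
      Tendsto (fun n => ∫ x, u n x * φ x) atTop (nhds (∫ x, v x * φ x))) :
    Tendsto (fun n => (∫ x, r (u n x) * u n x) - (∫ x, r (u n x - v x) * (u n x - v x))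
      - (∫ x, r (v x) * v x)) atTop (nhds 0) := by
  have hr : LipschitzWith (Real.toNNReal β) r :=
    LipschitzWith.of_dist_le' fun x y => by simpa only [Real.dist_eq] using hlip x y
  obtain ⟨C, hC, hCu⟩ := exists_eLpNorm_two_le_of_bddAbove_integral_mul hu2
    fun φ hφ => (hweak φ hφ).abs.bddAbove_range
  have hsub_bound : ∀ n, eLpNorm (fun x => u n x - v x) 2 volume ≤ C + eLpNorm v 2 volume :=
    fun n => (eLpNorm_sub_le (hu2 n).1 hv2.1 one_le_two).trans (add_le_add_left (hCu n) _)
  have hcross := tendsto_lintegral_enorm_mul_of_tendsto_eLpNorm_restrict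
    (w := fun n x => u n x - v x) (fun n => ((hu2 n).sub hv2).1) hv2
    (ENNReal.add_ne_top.2 ⟨hC, hv2.2.ne⟩) hsub_bound hloc
  have hupper := ENNReal.Tendsto.const_mul hcross
    (Or.inr (ENNReal.ofReal_ne_top (r := 2 * β.toNNReal)))
  rw [mul_zero] at hupper
  rw [tendsto_iff_enorm_sub_tendsto_zero]
  refine tendsto_of_tendsto_of_tendsto_of_le_of_le tendsto_const_nhds hupper (fun _ => zero_le)
    fun n => ?_
  simpa only [sub_zero] using hr.enorm_integral_comp_mul_self_sub_sub_le hr0 (hu2 n) hv2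

theorem stmt7 (N : ℕ) (β : ℝ) (hβ : 0 < β) (r : ℝ → ℝ) (hr0 : r 0 = 0)
    (hlip : ∀ s₁ s₂ : ℝ, |r s₁ - r s₂| ≤ β * |s₁ - s₂|)
    (u : ℕ → EuclideanSpace ℝ (Fin N) → ℝ) (v : EuclideanSpace ℝ (Fin N) → ℝ)
    (hu2 : ∀ n, MemLp (u n) 2 volume) (hv2 : MemLp v 2 volume)
    (hbdd : ∃ C : ℝ≥0∞, ∀ n, eLpNorm (u n) 2 volume ≤ C)
    (hloc : ∀ K : Set (EuclideanSpace ℝ (Fin N)), IsCompact K →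
      Tendsto (fun n => eLpNorm (fun x => u n x - v x) 2 (volume.restrict K)) atTop (nhds 0))
    (hweak : ∀ φ : EuclideanSpace ℝ (Fin N) → ℝ, MemLp φ 2 volume →
      Tendsto (fun n => ∫ x, u n x * φ x) atTop (nhds (∫ x, v x * φ x))) :
    Tendsto (fun n => (∫ x, r (u n x) * u n x) - (∫ x, r (u n x - v x) * (u n x - v x))
      - (∫ x, r (v x) * v x)) atTop (nhds 0) :=
  stmt7_general N β r hr0 hlip u v hu2 hv2 hloc hweak
end
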